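/- arXiv:1803.07499 — 3 statements merged into one kernel-verified Lean document; each statement's English description precedes it below -/
import Mathlib

section
/- Let s ∈ (0,1), and let f : ℝ → ℝ be a C¹ function with f ≥ 0 everywhere, whose derivative f' satisfies the Hölder condition |f'(x) - f'(y)| ≤ H·|x - y|^s for all x, y. Then there is a constant C depending only on s such that for every x ∈ ℝ, |f'(x)| ≤ C · H^{1/(1+s)} · (f(x))^{s/(1+s)}. -/
/-!
Where `a = f' x > 0`, Hölder continuity keeps `f' ≥ a / 2` on `[x - r, x]` with `H r ^ s = a / 2`.
Since `f ≥ 0`, `f x ≥ f x - f (x - r) ≥ a r / 2 = H r ^ (1 + s)`, and eliminating `r` gives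
`a / 2 ≤ H ^ (1 / (1 + s)) f(x) ^ (s / (1 + s))`. Applying this to `t ↦ f (-t)` bounds `-f' x`.
-/

open Real Set

section

variable {f f' : ℝ → ℝ}

lemma mul_le_of_le_deriv_on_Icc (hd : ∀ t, HasDerivAt f (f' t) t) (hf0 : ∀ t, 0 ≤ f t)
    {x r m : ℝ} (hr : 0 ≤ r) (hm : ∀ t ∈ Icc (x - r) x, m ≤ f' t) : m * r ≤ f x := by
  have hf : Differentiable ℝ f := fun t => (hd t).differentiableAt
  have hmvt := (convex_Icc (x - r) x).mul_sub_le_image_sub_of_le_deriv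
    hf.continuous.continuousOn hf.differentiableOn
    (fun t ht => (hd t).deriv ▸ hm t (interior_subset ht))
    (x - r) ⟨le_rfl, by linarith⟩ x ⟨by linarith, le_rfl⟩ (by linarith)
  rw [sub_sub_cancel] at hmvt
  linarith [hf0 (x - r)]

lemma nonpos_of_le_deriv_on_Iic (hd : ∀ t, HasDerivAt f (f' t) t) (hf0 : ∀ t, 0 ≤ f t)
    {x m : ℝ} (hm : ∀ t ≤ x, m ≤ f' t) : m ≤ 0 := by
  by_contra! hm0
  have hr : 0 ≤ (f x + 1) / m := div_nonneg (by linarith [hf0 x]) hm0.le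
  have := mul_le_of_le_deriv_on_Icc hd hf0 hr fun t ht => hm t ht.2
  rw [mul_div_cancel₀ _ hm0.ne'] at this
  linarith

end

lemma mul_rpow_le_of_mul_rpow_one_add_le {s H u F : ℝ} (hs : 0 < s) (hH : 0 ≤ H) (hu : 0 ≤ u)
    (h : H * u ^ (1 + s) ≤ F) : H * u ^ s ≤ H ^ (1 / (1 + s)) * F ^ (s / (1 + s)) := by
  have h1s : 1 + s ≠ 0 := by positivity
  have hsum : 1 / (1 + s) + s / (1 + s) = 1 := by field_simp
  calc H * u ^ s = H ^ (1 / (1 + s)) * (H * u ^ (1 + s)) ^ (s / (1 + s)) := by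
        rw [mul_rpow hH (by positivity), ← rpow_mul hu, mul_div_cancel₀ _ h1s, ← mul_assoc,
          ← rpow_add' hH (by rw [hsum]; exact one_ne_zero), hsum, rpow_one]
    _ ≤ H ^ (1 / (1 + s)) * F ^ (s / (1 + s)) := by gcongr

section

variable {s H : ℝ} {f f' : ℝ → ℝ}

lemma deriv_le_of_holder_of_pos (hs : 0 < s) (hH : 0 < H) (hd : ∀ t, HasDerivAt f (f' t) t)
    (hf0 : ∀ t, 0 ≤ f t) (hol : ∀ x y, |f' x - f' y| ≤ H * |x - y| ^ s) (x : ℝ) :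
    f' x ≤ 2 * H ^ (1 / (1 + s)) * f x ^ (s / (1 + s)) := by
  by_cases ha : f' x ≤ 0
  · have := hf0 x
    exact ha.trans (by positivity)
  push Not at ha
  set r := (f' x / (2 * H)) ^ (1 / s)
  have hr : 0 ≤ r := by positivity
  have hHr : H * r ^ s = f' x / 2 := by
    rw [← rpow_mul (by positivity), one_div_mul_cancel hs.ne', rpow_one]
    field_simp
  have hm : ∀ t ∈ Icc (x - r) x, f' x / 2 ≤ f' t := fun t ht => by
    have hxt : |x - t| ^ s ≤ r ^ s := by
      rw [abs_of_nonneg (by linarith [ht.2])]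
      exact rpow_le_rpow (by linarith [ht.2]) (by linarith [ht.1]) hs.le
    linarith [le_abs_self (f' x - f' t), hol x t, mul_le_mul_of_nonneg_left hxt hH.le]
  have hF : H * r ^ (1 + s) ≤ f x := by
    rw [add_comm, rpow_add' hr (by positivity), rpow_one, ← mul_assoc, hHr]
    exact mul_le_of_le_deriv_on_Icc hd hf0 hr hm
  linarith [mul_rpow_le_of_mul_rpow_one_add_le hs hH.le hr hF]

lemma deriv_le_of_holder (hs : 0 < s) (hH : 0 ≤ H) (hd : ∀ t, HasDerivAt f (f' t) t)
    (hf0 : ∀ t, 0 ≤ f t) (hol : ∀ x y, |f' x - f' y| ≤ H * |x - y| ^ s) (x : ℝ) :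
    f' x ≤ 2 * H ^ (1 / (1 + s)) * f x ^ (s / (1 + s)) := by
  rcases hH.eq_or_lt with rfl | hH
  · have hconst (t : ℝ) : f' x ≤ f' t := by
      linarith [le_abs_self (f' x - f' t), hol x t, zero_mul (|x - t| ^ s)]
    rw [zero_rpow (by positivity)]
    simpa using nonpos_of_le_deriv_on_Iic hd hf0 (x := x) fun t _ => hconst t
  · exact deriv_le_of_holder_of_pos hs hH hd hf0 hol x

end

theorem stmt3 (s : ℝ) (hs : s ∈ Set.Ioo (0:ℝ) 1) :
    ∃ C : ℝ, 0 < C ∧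
      ∀ (f f' : ℝ → ℝ) (H : ℝ),
        (∀ x, HasDerivAt f (f' x) x) →
        Continuous f' →
        (∀ x, 0 ≤ f x) →
        (∀ x y, |f' x - f' y| ≤ H * |x - y| ^ s) →
        ∀ x, |f' x| ≤ C * H ^ (1 / (1 + s)) * (f x) ^ (s / (1 + s)) := by
  refine ⟨2, two_pos, fun f f' H hd _ hf0 hol x => ?_⟩
  have hH : 0 ≤ H := by simpa using (abs_nonneg _).trans (hol 0 1)
  refine abs_le.mpr ⟨?_, deriv_le_of_holder hs.1 hH hd hf0 hol x⟩
  have hd_neg (t : ℝ) : HasDerivAt (fun u => f (-u)) (-f' (-t)) t := by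
    simpa [Function.comp_def] using (hd (-t)).comp t (hasDerivAt_neg t)
  have hol_neg (u v : ℝ) : |-f' (-u) - -f' (-v)| ≤ H * |u - v| ^ s := by
    simpa only [neg_sub_neg] using hol (-v) (-u)
  have := deriv_le_of_holder hs.1 hH hd_neg (fun t => hf0 (-t)) hol_neg (-x)
  simp only [neg_neg] at this
  linarith
end

section
/- For every y ∈ (0,1), sup over ε > 0 of [1/((1 + ln_+(1/ε))·(y + ε))] ≤ C/(y·(1 + |ln y|)) + 1/(1+y), for some universal constant C > 0. -/
noncomputable def lnPlus (t : ℝ) : ℝ := max (Real.log t) 0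

/-!
Put `B = y (1 + |ln y|)` and `A = (1 + ln₊ (1/ε)) (y + ε)`; then `B ≤ 3 A`, so `C = 3` works.
If `y ≤ ε²`, the bound `t |ln t| < 2 √t` on `(0, 1]` gives `B ≤ 3 √y ≤ 3 ε ≤ 3 A`. If `ε² < y`, then `|ln y| = -ln y < 2 ln (1/ε)`,
so `1 + |ln y| ≤ 2 (1 + ln₊ (1/ε))` and `B ≤ 2 A`.
-/

open Real

lemma log_le_lnPlus (t : ℝ) : log t ≤ lnPlus t := le_max_left _ _

lemma lnPlus_nonneg (t : ℝ) : 0 ≤ lnPlus t := le_max_right _ _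

lemma mul_one_add_abs_log_le_three_mul_sqrt {t : ℝ} (h0 : 0 ≤ t) (h1 : t ≤ 1) :
    t * (1 + |log t|) ≤ 3 * √t := by
  rcases h0.eq_or_lt with rfl | h0
  · simp
  have hs0 : 0 < √t := sqrt_pos.2 h0
  have hs1 : √t ≤ 1 := sqrt_le_one.2 h1
  have hlog : |log t| * √t < 2 := by
    have := abs_log_mul_self_lt (√t) hs0 hs1
    rw [log_sqrt h0.le, abs_mul, abs_div, abs_two, abs_of_pos hs0] at this
    linarith
  have ht : t = √t * √t := (mul_self_sqrt h0.le).symm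
  have hts : t ≤ √t := by nlinarith
  calc t * (1 + |log t|) = t + √t * (|log t| * √t) := by linear_combination |log t| * ht
    _ ≤ √t + √t * 2 := by gcongr
    _ = 3 * √t := by ring

lemma mul_one_add_abs_log_le_three_mul {y ε : ℝ} (hy0 : 0 ≤ y) (hy1 : y ≤ 1) (hε : 0 < ε) :
    y * (1 + |log y|) ≤ 3 * ((1 + lnPlus (1 / ε)) * (y + ε)) := by
  have hL := lnPlus_nonneg (1 / ε)
  rcases le_or_gt y (ε ^ 2) with hsmall | hlarge
  · have hsqrt : √y ≤ ε := (sqrt_le_left hε.le).2 hsmall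
    calc y * (1 + |log y|) ≤ 3 * √y := mul_one_add_abs_log_le_three_mul_sqrt hy0 hy1
      _ ≤ 3 * (1 * ε) := by linarith
      _ ≤ 3 * ((1 + lnPlus (1 / ε)) * (y + ε)) := by gcongr <;> linarith
  · have hy : 0 < y := (pow_pos hε 2).trans hlarge
    have hlog : |log y| ≤ 2 * lnPlus (1 / ε) := by
      have h2 : 2 * log ε < log y := by
        simpa only [log_pow, Nat.cast_ofNat] using log_lt_log (pow_pos hε 2) hlarge
      have h3 : -log ε ≤ lnPlus (1 / ε) := by
        simpa only [one_div, log_inv] using log_le_lnPlus ε⁻¹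
      rw [abs_of_nonpos (log_nonpos hy0 hy1)]
      linarith
    calc y * (1 + |log y|) ≤ (y + ε) * (2 * (1 + lnPlus (1 / ε))) := by
          gcongr <;> linarith
      _ ≤ 3 * ((1 + lnPlus (1 / ε)) * (y + ε)) := by nlinarith

theorem stmt5 : ∃ C : ℝ, 0 < C ∧
    ∀ y ∈ Set.Ioo (0:ℝ) 1, ∀ ε : ℝ, 0 < ε →
      1 / ((1 + lnPlus (1 / ε)) * (y + ε)) ≤
        C / (y * (1 + |Real.log y|)) + 1 / (1 + y) := by
  refine ⟨3, by norm_num, ?_⟩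
  rintro y ⟨hy0, hy1⟩ ε hε
  have hA : 0 < (1 + lnPlus (1 / ε)) * (y + ε) := by
    have := lnPlus_nonneg (1 / ε)
    positivity
  have hmain : 1 / ((1 + lnPlus (1 / ε)) * (y + ε)) ≤ 3 / (y * (1 + |log y|)) := by
    rw [div_le_div_iff₀ hA (by positivity)]
    linarith [mul_one_add_abs_log_le_three_mul hy0.le hy1.le hε]
  have : 0 ≤ 1 / (1 + y) := by positivity
  linarith
end

section
/- For all y ≥ 0 and all real numbers a, b with |a| ≤ b, one has y² + (2 + y·a)² ≥ (1 + y²)/(1 + b²). -/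
/-! Since `a² ≤ b²`, it suffices to bound `(1 + a²)(y² + (2 + y a)²)` below by `1 + y²`.
With `u = y a` the difference is `u² + (2 + u)² - 1 + a²(2 + u)² = 2(u + 1)² + 1 + (a(2 + u))²`. -/

theorem one_add_sq_le_one_add_sq_mul_sq_add_sq (y a : ℝ) :
    1 + y ^ 2 ≤ (1 + a ^ 2) * (y ^ 2 + (2 + y * a) ^ 2) := by
  have key : (1 + a ^ 2) * (y ^ 2 + (2 + y * a) ^ 2) - (1 + y ^ 2)
      = 2 * (y * a + 1) ^ 2 + 1 + (a * (2 + y * a)) ^ 2 := by ring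
  rw [← sub_nonneg, key]
  positivity

theorem stmt7_general (y a b : ℝ) (hab : |a| ≤ b) :
    (1 + y ^ 2) / (1 + b ^ 2) ≤ y ^ 2 + (2 + y * a) ^ 2 := by
  have hab_sq : a ^ 2 ≤ b ^ 2 := sq_le_sq.2 (hab.trans (le_abs_self b))
  rw [div_le_iff₀ (by positivity), mul_comm]
  calc 1 + y ^ 2 ≤ (1 + a ^ 2) * (y ^ 2 + (2 + y * a) ^ 2) :=
        one_add_sq_le_one_add_sq_mul_sq_add_sq y a
    _ ≤ (1 + b ^ 2) * (y ^ 2 + (2 + y * a) ^ 2) := by gcongr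

theorem stmt7 (y a b : ℝ) (hy : 0 ≤ y) (hab : |a| ≤ b) :
    (1 + y ^ 2) / (1 + b ^ 2) ≤ y ^ 2 + (2 + y * a) ^ 2 :=
  stmt7_general y a b hab
end
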